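/- arXiv:2511.04217 — 2 statements merged into one kernel-verified Lean document; each statement's English description precedes it below -/
import Mathlib

section
/- Let p be a probability vector in R^T and ε ∈ R^T with ‖ε‖_∞ ≤ ε_max. Define the reweighted probability vector p' by p'_j = p_j exp(ε_j)/Z with Z = Σ_k p_k exp(ε_k). Then ‖p − p'‖_1 ≤ exp(2 ε_max) − 1. -/
open scoped BigOperators

theorem stmt2 (T : ℕ) (hT : 0 < T) (p ε : Fin T → ℝ) (εmax : ℝ) (hεmax : 0 ≤ εmax)
    (hp : ∀ k, 0 ≤ p k) (hps : ∑ k, p k = 1)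
    (hε : ∀ j, |ε j| ≤ εmax) :
    ∑ j, |p j - p j * Real.exp (ε j) / (∑ k, p k * Real.exp (ε k))|
      ≤ Real.exp (2 * εmax) - 1 := by
  set Z := ∑ k, p k * Real.exp (ε k) with hZdef
  have hεl : ∀ j, -εmax ≤ ε j := fun j => (abs_le.mp (hε j)).1
  have hεu : ∀ j, ε j ≤ εmax := fun j => (abs_le.mp (hε j)).2
  have hZl : Real.exp (-εmax) ≤ Z := by
    calc Real.exp (-εmax) = ∑ k, p k * Real.exp (-εmax) := by
          rw [← Finset.sum_mul, hps, one_mul]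
      _ ≤ Z := Finset.sum_le_sum fun k _ =>
          mul_le_mul_of_nonneg_left (Real.exp_le_exp.mpr (hεl k)) (hp k)
  have hZu : Z ≤ Real.exp εmax := by
    calc Z ≤ ∑ k, p k * Real.exp εmax := Finset.sum_le_sum fun k _ =>
          mul_le_mul_of_nonneg_left (Real.exp_le_exp.mpr (hεu k)) (hp k)
      _ = Real.exp εmax := by rw [← Finset.sum_mul, hps, one_mul]
  have hZpos : 0 < Z := lt_of_lt_of_le (Real.exp_pos _) hZl
  have key : ∀ j, |p j - p j * Real.exp (ε j) / Z| ≤ p j * (Real.exp (2 * εmax) - 1) := by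
    intro j
    have h1 : p j - p j * Real.exp (ε j) / Z = p j * (1 - Real.exp (ε j) / Z) := by
      field_simp
    rw [h1, abs_mul, abs_of_nonneg (hp j)]
    apply mul_le_mul_of_nonneg_left _ (hp j)
    have hru : Real.exp (ε j) / Z ≤ Real.exp (2 * εmax) := by
      rw [div_le_iff₀ hZpos]
      calc Real.exp (ε j) ≤ Real.exp εmax := Real.exp_le_exp.mpr (hεu j)
        _ = Real.exp (2 * εmax) * Real.exp (-εmax) := by
            rw [← Real.exp_add]; ring_nf
        _ ≤ Real.exp (2 * εmax) * Z :=
            mul_le_mul_of_nonneg_left hZl (Real.exp_pos _).le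
    have hrl : Real.exp (-(2 * εmax)) ≤ Real.exp (ε j) / Z := by
      rw [le_div_iff₀ hZpos]
      calc Real.exp (-(2 * εmax)) * Z ≤ Real.exp (-(2 * εmax)) * Real.exp εmax :=
            mul_le_mul_of_nonneg_left hZu (Real.exp_pos _).le
        _ = Real.exp (-εmax) := by rw [← Real.exp_add]; ring_nf
        _ ≤ Real.exp (ε j) := Real.exp_le_exp.mpr (hεl j)
    have hmul : Real.exp (2 * εmax) * Real.exp (-(2 * εmax)) = 1 := by
      rw [← Real.exp_add]; simp
    have h2 : (1:ℝ) ≤ Real.exp (2 * εmax) := by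
      rw [show (1:ℝ) = Real.exp 0 by simp]
      exact Real.exp_le_exp.mpr (by linarith)
    rw [abs_le]
    constructor
    · nlinarith
    · nlinarith [Real.exp_pos (2 * εmax)]
  calc ∑ j, |p j - p j * Real.exp (ε j) / Z| ≤ ∑ j, p j * (Real.exp (2 * εmax) - 1) :=
        Finset.sum_le_sum fun j _ => key j
    _ = Real.exp (2 * εmax) - 1 := by rw [← Finset.sum_mul, hps, one_mul]
end

section
/- For masked softmax: given logits z ∈ R^T, a binary attention mask a ∈ {0,1}^T with at least one nonzero entry, define softmax(z; a)_j = a_j exp(z_j) / Σ_k a_k exp(z_k). Then for any perturbation ε ∈ R^T with ‖ε‖_∞ ≤ ε_max and any matrix X ∈ R^{T×d} with entries bounded by α, ‖softmax(z;a)^T X − softmax(z+ε;a)^T X‖_2 ≤ √d · α · (exp(2 ε_max) − 1). -/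
open scoped BigOperators

noncomputable def eNorm {d : ℕ} (v : Fin d → ℝ) : ℝ := Real.sqrt (∑ i, v i ^ 2)

/-!
Shifting every logit by at most `δ` rescales each unnormalized weight `a k * exp (z k)` by a
factor in `[exp (-δ), exp δ]`, hence each softmax probability by a factor in
`[exp (-2δ), exp (2δ)]`. So the two softmax distributions are at total variation
(`ℓ¹`) distance at most `exp (2δ) - 1`; averaging a column of `X`, whose entries are bounded
by `α`, against them gives coordinates differing by at most `α (exp (2δ) - 1)`, and the
Euclidean norm of a vector in `ℝ^d` is at most `√d` times its largest coordinate.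
-/

open Real Finset

theorem abs_sub_le_of_le_mul_of_le_mul {p q c : ℝ} (hc : 1 ≤ c)
    (hqp : q ≤ c * p) (hpq : p ≤ c * q) : |p - q| ≤ (c - 1) * p := by
  rw [abs_le]
  constructor
  · linarith
  · -- `c * (q - (2 - c) * p) ≥ (c - 1) ^ 2 * p`, which is `≥ 0` since `p ≤ c ^ 2 * p`
    nlinarith

theorem abs_sum_mul_sub_sum_mul_le {ι : Type*} [Fintype ι] {p q x : ι → ℝ} {α : ℝ}
    (hx : ∀ k, |x k| ≤ α) : |∑ k, p k * x k - ∑ k, q k * x k| ≤ α * ∑ k, |p k - q k| := by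
  rw [← sum_sub_distrib, mul_sum]
  refine (abs_sum_le_sum_abs _ _).trans (sum_le_sum fun k _ => ?_)
  rw [← sub_mul, abs_mul, mul_comm α]
  exact mul_le_mul_of_nonneg_left (hx k) (abs_nonneg _)

theorem eNorm_le_sqrt_mul {d : ℕ} {v : Fin d → ℝ} {C : ℝ} (hC : 0 ≤ C) (hv : ∀ i, |v i| ≤ C) :
    eNorm v ≤ √d * C :=
  calc eNorm v ≤ √(∑ _i : Fin d, C ^ 2) :=
        sqrt_le_sqrt (sum_le_sum fun i _ => sq_le_sq' (abs_le.mp (hv i)).1 (abs_le.mp (hv i)).2)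
    _ = √d * C := by
        rw [sum_const, card_univ, Fintype.card_fin, nsmul_eq_mul, sqrt_mul (Nat.cast_nonneg d),
          sqrt_sq hC]

section MaskedSoftmax

variable {ι : Type*} [Fintype ι] {a : ι → ℝ}

noncomputable def maskedSoftmax (a z : ι → ℝ) (k : ι) : ℝ :=
  a k * exp (z k) / ∑ l, a l * exp (z l)

theorem sum_mul_exp_pos (ha : ∀ k, 0 ≤ a k) (ha_pos : 0 < ∑ k, a k) (z : ι → ℝ) :
    0 < ∑ k, a k * exp (z k) := by
  obtain ⟨k, -, hk⟩ := exists_lt_of_sum_lt (by simpa using ha_pos : ∑ _k : ι, (0 : ℝ) < ∑ k, a k)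
  exact sum_pos' (fun l _ => mul_nonneg (ha l) (exp_pos _).le)
    ⟨k, mem_univ k, mul_pos hk (exp_pos _)⟩

theorem sum_maskedSoftmax (ha : ∀ k, 0 ≤ a k) (ha_pos : 0 < ∑ k, a k) (z : ι → ℝ) :
    ∑ k, maskedSoftmax a z k = 1 := by
  simp only [maskedSoftmax]
  rw [← sum_div, div_self (sum_mul_exp_pos ha ha_pos z).ne']

theorem maskedSoftmax_add_le (ha : ∀ k, 0 ≤ a k) (ha_pos : 0 < ∑ k, a k) {z ε : ι → ℝ} {δ : ℝ}
    (hε : ∀ k, |ε k| ≤ δ) (k : ι) :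
    maskedSoftmax a (z + ε) k ≤ exp (2 * δ) * maskedSoftmax a z k := by
  have hterm (l : ι) : 0 ≤ a l * exp (z l) := mul_nonneg (ha l) (exp_pos _).le
  have hshift (l : ι) : a l * exp (z l + ε l) = a l * exp (z l) * exp (ε l) := by
    rw [exp_add, mul_assoc]
  have hnum : a k * exp (z k + ε k) ≤ exp δ * (a k * exp (z k)) := by
    rw [hshift, mul_comm]
    exact mul_le_mul_of_nonneg_right (exp_le_exp.mpr (abs_le.mp (hε k)).2) (hterm k)
  have hden : exp (-δ) * ∑ l, a l * exp (z l) ≤ ∑ l, a l * exp (z l + ε l) := by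
    rw [mul_sum]
    refine sum_le_sum fun l _ => ?_
    rw [hshift, mul_comm]
    exact mul_le_mul_of_nonneg_left (exp_le_exp.mpr (abs_le.mp (hε l)).1) (hterm l)
  calc maskedSoftmax a (z + ε) k
      ≤ exp δ * (a k * exp (z k)) / (exp (-δ) * ∑ l, a l * exp (z l)) :=
        div_le_div₀ (mul_nonneg (exp_pos _).le (hterm k)) hnum (mul_pos (exp_pos _) (sum_mul_exp_pos ha ha_pos z)) hden
    _ = exp (2 * δ) * maskedSoftmax a z k := by
        rw [maskedSoftmax, two_mul, exp_add, exp_neg]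
        field_simp

theorem abs_maskedSoftmax_sub_le (ha : ∀ k, 0 ≤ a k) (ha_pos : 0 < ∑ k, a k) {z ε : ι → ℝ}
    {δ : ℝ} (hδ : 0 ≤ δ) (hε : ∀ k, |ε k| ≤ δ) (k : ι) :
    |maskedSoftmax a z k - maskedSoftmax a (z + ε) k| ≤ (exp (2 * δ) - 1) * maskedSoftmax a z k := by
  have hback : maskedSoftmax a z k ≤ exp (2 * δ) * maskedSoftmax a (z + ε) k := by
    simpa using maskedSoftmax_add_le ha ha_pos (z := z + ε) (ε := -ε) (by simpa using hε) k
  exact abs_sub_le_of_le_mul_of_le_mul (one_le_exp (by linarith))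
    (maskedSoftmax_add_le ha ha_pos hε k) hback

theorem sum_abs_maskedSoftmax_sub_le (ha : ∀ k, 0 ≤ a k) (ha_pos : 0 < ∑ k, a k)
    {z ε : ι → ℝ} {δ : ℝ} (hδ : 0 ≤ δ) (hε : ∀ k, |ε k| ≤ δ) :
    ∑ k, |maskedSoftmax a z k - maskedSoftmax a (z + ε) k| ≤ exp (2 * δ) - 1 :=
  calc ∑ k, |maskedSoftmax a z k - maskedSoftmax a (z + ε) k|
      ≤ ∑ k, (exp (2 * δ) - 1) * maskedSoftmax a z k :=
        sum_le_sum fun k _ => abs_maskedSoftmax_sub_le ha ha_pos hδ hε k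
    _ = exp (2 * δ) - 1 := by rw [← mul_sum, sum_maskedSoftmax ha ha_pos, mul_one]

end MaskedSoftmax

theorem stmt3 (T d : ℕ) (α εmax : ℝ) (hα : 0 ≤ α) (hεmax : 0 ≤ εmax)
    (a : Fin T → ℝ) (ha : ∀ j, a j = 0 ∨ a j = 1) (ha1 : 1 ≤ ∑ j, a j)
    (z ε : Fin T → ℝ) (hε : ∀ j, |ε j| ≤ εmax)
    (X : Matrix (Fin T) (Fin d) ℝ) (hX : ∀ k j, |X k j| ≤ α) :
    eNorm (fun j =>
        (∑ k, (a k * Real.exp (z k) / ∑ l, a l * Real.exp (z l)) * X k j)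
          - ∑ k, (a k * Real.exp (z k + ε k) / ∑ l, a l * Real.exp (z l + ε l)) * X k j)
      ≤ Real.sqrt d * α * (Real.exp (2 * εmax) - 1) := by
  have ha0 (j : Fin T) : 0 ≤ a j := by rcases ha j with h | h <;> simp [h]
  have ha_pos : 0 < ∑ j, a j := by linarith
  have hcoord (j : Fin d) :
      |∑ k, maskedSoftmax a z k * X k j - ∑ k, maskedSoftmax a (z + ε) k * X k j|
        ≤ α * (exp (2 * εmax) - 1) :=
    (abs_sum_mul_sub_sum_mul_le fun k => hX k j).trans
      (mul_le_mul_of_nonneg_left (sum_abs_maskedSoftmax_sub_le ha0 ha_pos hεmax hε) hα)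
  rw [mul_assoc]
  exact eNorm_le_sqrt_mul (mul_nonneg hα (by linarith [one_le_exp (by linarith : 0 ≤ 2 * εmax)]))
    hcoord
end
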